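/- Let s, t, k be integers with 2 ≤ k < s/3 and t ≥ s ≥ 7. Then m_2(K_t, K_{⌈s/k⌉}') ≥ m_2(K_{t-1}, K_s'), m_2(K_{t-1}) ≥ m_2(K_s'), and K_{t-1} is strictly balanced with respect to m_2(·, K_s'). -/

import Mathlib

open SimpleGraph Filter

/-- The number of edges `e(G)` of a graph. -/
noncomputable def numEdges {V : Type*} (G : SimpleGraph V) : ℕ := Nat.card G.edgeSet

/-- `d₂` evaluated on a (vertex count, edge count) pair : `0` if there are no edges,
`1/2` for a single edge (`v = 2`), and `(e-1)/(v-2)` otherwise. -/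
noncomputable def dens2 (v e : ℕ) : ℝ :=
  if e = 0 then 0 else if v = 2 then 1 / 2 else ((e : ℝ) - 1) / ((v : ℝ) - 2)

/-- The 2-density `m₂(G) = max_{G' ⊆ G} d₂(G')`. -/
noncomputable def m2 {V : Type*} (G : SimpleGraph V) : ℝ :=
  sSup {x | ∃ G' : G.Subgraph, x = dens2 (Nat.card G'.verts) (Nat.card G'.edgeSet)}

/-- The asymmetric density
`m₂(H₁,H₂) = max { e(H₁') / (v(H₁') - 2 + 1/m₂(H₂)) : H₁' ⊆ H₁, e(H₁') ≥ 1 }`. -/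
noncomputable def m2Asym {V₁ V₂ : Type*} (H₁ : SimpleGraph V₁) (H₂ : SimpleGraph V₂) : ℝ :=
  sSup {x | ∃ H' : H₁.Subgraph, 1 ≤ Nat.card H'.edgeSet ∧
    x = (Nat.card H'.edgeSet : ℝ) / ((Nat.card H'.verts : ℝ) - 2 + 1 / m2 H₂)}

/-- `H₁` is strictly balanced with respect to `m₂(·,H₂)`: no proper subgraph with at
least one edge attains the maximum in the definition of `m₂(H₁,H₂)`. -/
def StrictlyBalancedWrt {V₁ V₂ : Type*} (H₁ : SimpleGraph V₁) (H₂ : SimpleGraph V₂) : Prop :=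
  ∀ H' : H₁.Subgraph, H' ≠ ⊤ → 1 ≤ Nat.card H'.edgeSet →
    (Nat.card H'.edgeSet : ℝ) / ((Nat.card H'.verts : ℝ) - 2 + 1 / m2 H₂) < m2Asym H₁ H₂

/-- `m(G) = max { e(F)/v(F) : F ⊆ G }`. -/
noncomputable def mDensity {V : Type*} (G : SimpleGraph V) : ℝ :=
  sSup {x | ∃ G' : G.Subgraph, x = (Nat.card G'.edgeSet : ℝ) / (Nat.card G'.verts : ℝ)}

/-- `d(G) = e(G)/v(G)`. -/
noncomputable def edgeVertexRatio {V : Type*} (G : SimpleGraph V) : ℝ :=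
  (numEdges G : ℝ) / (Nat.card V : ℝ)

/-- `G` contains a copy of `H` as a subgraph. -/
def ContainsCopy {W V : Type*} (H : SimpleGraph W) (G : SimpleGraph V) : Prop :=
  ∃ f : W ↪ V, ∀ a b, H.Adj a b → G.Adj (f a) (f b)

/-- `F` is `(H₁,H₂)`-Ramsey: every red/blue coloring of the edges of `F` (given by the
subgraph `R ≤ F` of red edges) yields a red copy of `H₁` or a blue copy of `H₂`. -/
def IsRamseyFor {W₁ W₂ V : Type*} (H₁ : SimpleGraph W₁) (H₂ : SimpleGraph W₂)
    (F : SimpleGraph V) : Prop :=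
  ∀ R : SimpleGraph V, R ≤ F → ContainsCopy H₁ R ∨ ContainsCopy H₂ (F \ R)

/-- The probability that the Erdős–Rényi random graph `G(n,p)` lies in the event `A`. -/
noncomputable def erProb (n : ℕ) (p : ℝ) (A : Set (SimpleGraph (Fin n))) : ℝ :=
  ∑ G : SimpleGraph (Fin n),
    Set.indicator A (fun G => p ^ numEdges G * (1 - p) ^ (n.choose 2 - numEdges G)) G

/-- The density of an `n`-vertex graph: its number of edges divided by `C(n,2)`. -/
noncomputable def graphDensity (n : ℕ) (G : SimpleGraph (Fin n)) : ℝ :=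
  (numEdges G : ℝ) / (n.choose 2 : ℝ)

/-- `phat` is the perturbed Ramsey threshold `p(n;H₁,H₂,d)`:
(i) if `p = ω(phat)` then for every sequence of `n`-vertex graphs of density at least `d`,
`Gₙ ∪ G(n,p)` is `(H₁,H₂)`-Ramsey whp; (ii) if `p = o(phat)` then for some such sequence,
`Gₙ ∪ G(n,p)` is whp not `(H₁,H₂)`-Ramsey. -/
def IsPerturbedRamseyThreshold {W₁ W₂ : Type*} (H₁ : SimpleGraph W₁) (H₂ : SimpleGraph W₂)
    (d : ℝ) (phat : ℕ → ℝ) : Prop :=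
  (∀ p : ℕ → ℝ, (∀ n, 0 ≤ p n ∧ p n ≤ 1) →
      Tendsto (fun n => p n / phat n) atTop atTop →
      ∀ Gseq : (n : ℕ) → SimpleGraph (Fin n),
        (∀ᶠ n in atTop, d ≤ graphDensity n (Gseq n)) →
        Tendsto (fun n => erProb n (p n) {R | IsRamseyFor H₁ H₂ (Gseq n ⊔ R)})
          atTop (nhds 1)) ∧
  (∀ p : ℕ → ℝ, (∀ n, 0 ≤ p n ∧ p n ≤ 1) →
      Tendsto (fun n => p n / phat n) atTop (nhds 0) →
      ∃ Gseq : (n : ℕ) → SimpleGraph (Fin n),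
        (∀ᶠ n in atTop, d ≤ graphDensity n (Gseq n)) ∧
        Tendsto (fun n => erProb n (p n) {R | ¬ IsRamseyFor H₁ H₂ (Gseq n ⊔ R)})
          atTop (nhds 1))

/-- `K_m'`: the complete graph on `Fin m` minus the maximum matching
`{0,1}, {2,3}, …`. -/
def cliqueMinusMatching (m : ℕ) : SimpleGraph (Fin m) :=
  SimpleGraph.fromRel (fun x y => x.val / 2 ≠ y.val / 2)

/-- The graph obtained from `T` by adding a new (apex) vertex `none` joined to the
vertices of `S`. -/
def apexGraph {VT : Type*} (T : SimpleGraph VT) (S : Set VT) : SimpleGraph (Option VT) :=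
  SimpleGraph.fromRel (fun x y =>
    (∃ a b, x = some a ∧ y = some b ∧ T.Adj a b) ∨ (x = none ∧ ∃ a ∈ S, y = some a))

/-- The star on `t` vertices (center `0`, leaves `1,…,t-1`) together with a new vertex `t`
adjacent to every vertex of the star. -/
def starPlusApex (t : ℕ) : SimpleGraph (Fin (t + 1)) :=
  SimpleGraph.fromRel (fun x y =>
    (x.val = 0 ∧ 1 ≤ y.val ∧ y.val < t) ∨ (x.val = t ∧ y.val < t))

open scoped Classical in
/-- The edge density `d(A,B) = e(A,B)/(|A|·|B|)` between two finite vertex sets. -/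
noncomputable def pairDensity {V : Type*} (G : SimpleGraph V) (A B : Finset V) : ℝ :=
  (((A ×ˢ B).filter (fun p => G.Adj p.1 p.2)).card : ℝ) / ((A.card : ℝ) * (B.card : ℝ))

/-- `(A,B)` is an `ε`-regular pair: for all `X ⊆ A`, `Y ⊆ B` with `|X| > ε|A|` and
`|Y| > ε|B|`, one has `|d(X,Y) - d(A,B)| < ε`. -/
def EpsRegularPair {V : Type*} (G : SimpleGraph V) (ε : ℝ) (A B : Finset V) : Prop :=
  ∀ X ⊆ A, ∀ Y ⊆ B, ε * (A.card : ℝ) < (X.card : ℝ) → ε * (B.card : ℝ) < (Y.card : ℝ) →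
    |pairDensity G X Y - pairDensity G A B| < ε


/-!
Put `n = t - 1` and `μ = m₂(K_s')`. A vertex set of size `v` in `K_s'` meets at most `⌈s/2⌉`
classes of the deleted matching, so it contains at least `v - ⌈s/2⌉` non-edges; this gives
`μ < s/2 ≤ (n + 1)/2 ≤ m₂(K_n)`. Once `m₂(H₂) < (n + 1)/2`, the ratio
`e(H')/(v(H') - 2 + 1/m₂(H₂))` over subgraphs `H' ⊆ K_n` is maximised by `K_n` alone, so `K_n`
is strictly balanced and `m₂(K_n, K_s') = C(n,2)/(n - 2 + 1/μ)`. Finally `m₂(K_m') ≥ 1` for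
`m = ⌈s/k⌉ ≥ 3` (a path with two edges), and with this the ratio of `K_n` is at most that of
`K_{n+1}` itself.
-/

namespace SimpleGraph.Subgraph

variable {V : Type*} {G : SimpleGraph V}

theorem card_verts_le [Finite V] (H : G.Subgraph) : Nat.card H.verts ≤ Nat.card V := by
  rw [Nat.card_coe_set_eq]
  exact Set.ncard_le_card _

theorem card_edgeSet_le_choose_two [Finite V] (H : G.Subgraph) :
    Nat.card H.edgeSet ≤ (Nat.card H.verts).choose 2 := by
  classical
  have := Fintype.ofFinite V
  rw [← H.image_coe_edgeSet_coe,
    Nat.card_image_of_injective (Sym2.map.injective Subtype.coe_injective),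
    Nat.card_eq_fintype_card, ← Set.toFinset_card, Nat.card_eq_fintype_card]
  exact H.coe.card_edgeFinset_le_card_choose_two

theorem card_verts_top : Nat.card (⊤ : G.Subgraph).verts = Nat.card V := by
  rw [verts_top, Nat.card_univ]

theorem card_edgeSet_top [Fintype V] :
    Nat.card (⊤ : (⊤ : SimpleGraph V).Subgraph).edgeSet = (Fintype.card V).choose 2 := by
  classical
  rw [edgeSet_top, Nat.card_eq_fintype_card, ← Set.toFinset_card, ← edgeFinset,
    card_edgeFinset_top_eq_card_choose_two]

theorem eq_top_of_card_verts_of_card_edgeSet [Fintype V] {H : (⊤ : SimpleGraph V).Subgraph}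
    (hv : Nat.card H.verts = Fintype.card V)
    (he : Nat.card H.edgeSet = (Fintype.card V).choose 2) : H = ⊤ := by
  have hverts : H.verts = Set.univ := by
    refine Set.eq_of_subset_of_ncard_le (Set.subset_univ _) ?_
    rw [Set.ncard_univ, ← Nat.card_coe_set_eq, hv, Nat.card_eq_fintype_card]
  have hedges : H.edgeSet = (⊤ : SimpleGraph V).edgeSet := by
    refine Set.eq_of_subset_of_ncard_le H.edgeSet_subset ?_
    rw [← Nat.card_coe_set_eq, ← Nat.card_coe_set_eq, he, ← edgeSet_top, card_edgeSet_top]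
  ext x y
  · simp [hverts]
  · rw [← Subgraph.mem_edgeSet, hedges, top_adj, mem_edgeSet]

theorem card_edgeSet_add_card_edgeSet_compl_le [Finite V] (H : G.Subgraph) :
    Nat.card H.edgeSet + Nat.card ((⊤ : Gᶜ.Subgraph).induce H.verts).edgeSet ≤
      (Nat.card H.verts).choose 2 := by
  set K := (⊤ : (⊤ : SimpleGraph V).Subgraph).induce H.verts
  have hdisj : Disjoint H.edgeSet ((⊤ : Gᶜ.Subgraph).induce H.verts).edgeSet := by
    refine Set.disjoint_left.2 fun e => Sym2.ind (fun x y he he' => ?_) e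
    exact (he'.2.2.2) (H.adj_sub he)
  have hsub : H.edgeSet ∪ ((⊤ : Gᶜ.Subgraph).induce H.verts).edgeSet ⊆ K.edgeSet := by
    refine Set.union_subset (fun e => Sym2.ind (fun x y he => ?_) e)
      (fun e => Sym2.ind (fun x y he => ?_) e)
    · exact ⟨H.edge_vert he, H.edge_vert he.symm, (H.adj_sub he).ne⟩
    · exact ⟨he.1, he.2.1, he.2.2.1⟩
  calc Nat.card H.edgeSet + Nat.card ((⊤ : Gᶜ.Subgraph).induce H.verts).edgeSet
      = (H.edgeSet ∪ ((⊤ : Gᶜ.Subgraph).induce H.verts).edgeSet).ncard := by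
        rw [Set.ncard_union_eq hdisj, Nat.card_coe_set_eq, Nat.card_coe_set_eq]
    _ ≤ Nat.card K.edgeSet := by
        rw [Nat.card_coe_set_eq]
        exact Set.ncard_le_ncard hsub
    _ ≤ (Nat.card H.verts).choose 2 := K.card_edgeSet_le_choose_two

end SimpleGraph.Subgraph

section Density

variable {V : Type*} [Finite V]

theorem m2_set_finite (G : SimpleGraph V) :
    {x | ∃ G' : G.Subgraph, x = dens2 (Nat.card G'.verts) (Nat.card G'.edgeSet)}.Finite :=
  (Set.finite_range fun G' : G.Subgraph => dens2 (Nat.card G'.verts) (Nat.card G'.edgeSet)).subset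
    fun _ ⟨G', hx⟩ => ⟨G', hx.symm⟩

theorem le_m2 {G : SimpleGraph V} (G' : G.Subgraph) :
    dens2 (Nat.card G'.verts) (Nat.card G'.edgeSet) ≤ m2 G :=
  le_csSup (m2_set_finite G).bddAbove ⟨G', rfl⟩

theorem m2_lt_of_forall {G : SimpleGraph V} {b : ℝ}
    (h : ∀ G' : G.Subgraph, dens2 (Nat.card G'.verts) (Nat.card G'.edgeSet) < b) : m2 G < b :=
  ((m2_set_finite G).csSup_lt_iff ⟨_, ⊥, rfl⟩).2 fun _ ⟨G', hx⟩ => hx ▸ h G'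

theorem one_le_m2_of_adj {G : SimpleGraph V} {a b c : V} (hab : G.Adj a b) (hbc : G.Adj b c)
    (hac : a ≠ c) : 1 ≤ m2 G := by
  set P := G.subgraphOfAdj hab ⊔ G.subgraphOfAdj hbc
  have hv : Nat.card P.verts = 3 := by
    rw [Nat.card_coe_set_eq, Set.ncard_eq_three]
    exact ⟨a, b, c, hab.ne, hac, hbc.ne, by ext; simp [P]; tauto⟩
  have he : Nat.card P.edgeSet = 2 := by
    rw [Subgraph.edgeSet_sup, edgeSet_subgraphOfAdj, edgeSet_subgraphOfAdj, Nat.card_coe_set_eq,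
      Set.singleton_union, Set.ncard_pair]
    simp [hab.ne, hac]
  have := le_m2 P
  rw [hv, he] at this
  norm_num [dens2] at this
  exact this

end Density

noncomputable def asymDens (c : ℝ) (v e : ℕ) : ℝ := e / ((v : ℝ) - 2 + c)

section AsymDensity

variable {V W : Type*}

theorem m2Asym_set_finite [Finite V] (H₁ : SimpleGraph V) (H₂ : SimpleGraph W) :
    {x | ∃ H' : H₁.Subgraph, 1 ≤ Nat.card H'.edgeSet ∧
      x = (Nat.card H'.edgeSet : ℝ) / ((Nat.card H'.verts : ℝ) - 2 + 1 / m2 H₂)}.Finite :=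
  (Set.finite_range fun H' : H₁.Subgraph =>
    asymDens (1 / m2 H₂) (Nat.card H'.verts) (Nat.card H'.edgeSet)).subset
    fun _ ⟨H', _, hx⟩ => ⟨H', hx.symm⟩

theorem le_m2Asym [Finite V] {H₁ : SimpleGraph V} (H₂ : SimpleGraph W) {H' : H₁.Subgraph}
    (he : 1 ≤ Nat.card H'.edgeSet) :
    asymDens (1 / m2 H₂) (Nat.card H'.verts) (Nat.card H'.edgeSet) ≤ m2Asym H₁ H₂ :=
  le_csSup (m2Asym_set_finite H₁ H₂).bddAbove ⟨H', he, rfl⟩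

theorem m2Asym_le_of_forall {H₁ : SimpleGraph V} {H₂ : SimpleGraph W} {b : ℝ}
    (hne : ∃ H' : H₁.Subgraph, 1 ≤ Nat.card H'.edgeSet)
    (h : ∀ H' : H₁.Subgraph, 1 ≤ Nat.card H'.edgeSet →
      asymDens (1 / m2 H₂) (Nat.card H'.verts) (Nat.card H'.edgeSet) ≤ b) :
    m2Asym H₁ H₂ ≤ b :=
  csSup_le (hne.elim fun H' he => ⟨_, H', he, rfl⟩) fun _ ⟨H', he, hx⟩ => hx ▸ h H' he

end AsymDensity

section Arithmetic

variable {c : ℝ}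

theorem two_lt_one_div_mul_of_lt_half {μ x : ℝ} (h₀ : 0 < μ) (h : μ < x / 2) :
    2 < 1 / μ * x := by
  rw [one_div_mul_eq_div, lt_div_iff₀ h₀]
  linarith

theorem asymDens_choose_lt_asymDens_choose {v n : ℕ} (hc : 0 < c) (hv : 3 ≤ v) (hvn : v < n) :
    asymDens c v (v.choose 2) < asymDens c n (n.choose 2) := by
  have hv' : (3 : ℝ) ≤ v := by exact_mod_cast hv
  have hvn' : (v : ℝ) + 1 ≤ n := by exact_mod_cast hvn
  unfold asymDens
  rw [Nat.cast_choose_two, Nat.cast_choose_two, div_lt_div_iff₀ (by linarith) (by linarith)]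
  nlinarith [mul_nonneg (by linarith : (0 : ℝ) ≤ n - v)
      (by nlinarith : (0 : ℝ) ≤ (n - 2) * (v - 2) - 2),
    mul_pos (by linarith : (0 : ℝ) < n - v) (by nlinarith : 0 < c * (n + v - 1))]

theorem asymDens_one_lt_asymDens_choose {n : ℕ} (hn : 3 ≤ n) (hcn : 2 < c * (n + 1)) :
    asymDens c 2 1 < asymDens c n (n.choose 2) := by
  have hn' : (3 : ℝ) ≤ n := by exact_mod_cast hn
  have hc : 0 < c := by nlinarith
  unfold asymDens
  rw [Nat.cast_choose_two, div_lt_div_iff₀ (by norm_num; linarith) (by linarith)]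
  nlinarith

theorem asymDens_lt_asymDens_choose {n v e : ℕ} (hcn : 2 < c * (n + 1))
    (hvn : v ≤ n) (he₁ : 1 ≤ e) (he : e ≤ v.choose 2) (hne : v < n ∨ e < n.choose 2) :
    asymDens c v e < asymDens c n (n.choose 2) := by
  have hc : 0 < c := by nlinarith [(n.cast_nonneg : (0 : ℝ) ≤ n)]
  have hv : 2 ≤ v := by
    by_contra! h
    rw [Nat.choose_eq_zero_of_lt h] at he
    omega
  have hpos : (0 : ℝ) < (v : ℝ) - 2 + c := by
    have : (2 : ℝ) ≤ v := by exact_mod_cast hv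
    linarith
  rcases hvn.lt_or_eq with hvn | rfl
  · rcases hv.eq_or_lt with rfl | hv
    · obtain rfl : e = 1 := by simp at he; omega
      exact asymDens_one_lt_asymDens_choose (by omega) hcn
    · calc asymDens c v e ≤ asymDens c v (v.choose 2) := by
            unfold asymDens
            gcongr
          _ < asymDens c n (n.choose 2) := asymDens_choose_lt_asymDens_choose hc hv hvn
  · have he' : (e : ℝ) < v.choose 2 := by exact_mod_cast hne.resolve_left (lt_irrefl v)
    exact div_lt_div_of_pos_right he' hpos

theorem asymDens_choose_le_asymDens_succ {n : ℕ} {c' : ℝ} (hn : 2 ≤ n)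
    (hc' : 0 ≤ c') (hc'1 : c' ≤ 1) (hcn : 2 ≤ c * (n + 1)) :
    asymDens c n (n.choose 2) ≤ asymDens c' (n + 1) ((n + 1).choose 2) := by
  have hn' : (2 : ℝ) ≤ n := by exact_mod_cast hn
  have hc : 0 < c := by nlinarith
  unfold asymDens
  rw [Nat.cast_choose_two, Nat.cast_choose_two,
    div_le_div_iff₀ (by linarith) (by push_cast; linarith)]
  push_cast
  nlinarith [mul_nonneg (by linarith : (0 : ℝ) ≤ n - 1) (by linarith : (0 : ℝ) ≤ 1 - c')]

end Arithmetic

section CompleteGraph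

open Subgraph

variable {V W : Type*} [Fintype V]

theorem le_m2_top (hV : 3 ≤ Fintype.card V) :
    ((Fintype.card V : ℝ) + 1) / 2 ≤ m2 (⊤ : SimpleGraph V) := by
  have hV' : (3 : ℝ) ≤ Fintype.card V := by exact_mod_cast hV
  convert le_m2 (⊤ : (⊤ : SimpleGraph V).Subgraph) using 1
  rw [card_verts_top, card_edgeSet_top, Nat.card_eq_fintype_card, dens2,
    if_neg (Nat.choose_pos (by omega)).ne', if_neg (by omega), Nat.cast_choose_two,
    eq_div_iff (by linarith)]
  ring

theorem asymDens_lt_asymDens_top {c : ℝ} (hcV : 2 < c * (Fintype.card V + 1))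
    {H : (⊤ : SimpleGraph V).Subgraph} (hH : H ≠ ⊤) (he : 1 ≤ Nat.card H.edgeSet) :
    asymDens c (Nat.card H.verts) (Nat.card H.edgeSet) <
      asymDens c (Fintype.card V) ((Fintype.card V).choose 2) := by
  refine asymDens_lt_asymDens_choose hcV ?_ he H.card_edgeSet_le_choose_two ?_
  · simpa using H.card_verts_le
  · by_contra! h
    have hv : Nat.card H.verts = Fintype.card V :=
      le_antisymm (by simpa using H.card_verts_le) h.1
    refine hH (eq_top_of_card_verts_of_card_edgeSet hv (le_antisymm ?_ h.2))
    simpa [hv] using H.card_edgeSet_le_choose_two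

theorem asymDens_top_le_m2Asym (H₂ : SimpleGraph W) (hV : 2 ≤ Fintype.card V) :
    asymDens (1 / m2 H₂) (Fintype.card V) ((Fintype.card V).choose 2) ≤
      m2Asym (⊤ : SimpleGraph V) H₂ := by
  have he : 1 ≤ Nat.card (⊤ : (⊤ : SimpleGraph V).Subgraph).edgeSet := by
    rw [card_edgeSet_top]
    exact Nat.choose_pos hV
  have := le_m2Asym H₂ he
  rwa [card_verts_top, card_edgeSet_top, Nat.card_eq_fintype_card] at this

theorem m2Asym_top_eq {H₂ : SimpleGraph W} (hV : 2 ≤ Fintype.card V) (h₀ : 0 < m2 H₂)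
    (h : m2 H₂ < ((Fintype.card V : ℝ) + 1) / 2) :
    m2Asym (⊤ : SimpleGraph V) H₂ =
      asymDens (1 / m2 H₂) (Fintype.card V) ((Fintype.card V).choose 2) := by
  refine le_antisymm (m2Asym_le_of_forall ⟨⊤, ?_⟩ fun H' he' => ?_)
    (asymDens_top_le_m2Asym H₂ hV)
  · rw [card_edgeSet_top]
    exact Nat.choose_pos hV
  · rcases eq_or_ne H' ⊤ with rfl | hH'
    · rw [card_verts_top, card_edgeSet_top, Nat.card_eq_fintype_card]
    · exact (asymDens_lt_asymDens_top (two_lt_one_div_mul_of_lt_half h₀ h) hH' he').le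

theorem strictlyBalancedWrt_top {H₂ : SimpleGraph W} (hV : 2 ≤ Fintype.card V)
    (h₀ : 0 < m2 H₂) (h : m2 H₂ < ((Fintype.card V : ℝ) + 1) / 2) :
    StrictlyBalancedWrt (⊤ : SimpleGraph V) H₂ := fun H' hH' he => by
  rw [m2Asym_top_eq hV h₀ h]
  exact asymDens_lt_asymDens_top (two_lt_one_div_mul_of_lt_half h₀ h) hH' he

end CompleteGraph

theorem cliqueMinusMatching_adj {m : ℕ} {x y : Fin m} :
    (cliqueMinusMatching m).Adj x y ↔ x.val / 2 ≠ y.val / 2 := by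
  simp only [cliqueMinusMatching, fromRel_adj]
  constructor
  · rintro ⟨-, h | h⟩ <;> omega
  · intro h
    exact ⟨fun hxy => h (by rw [hxy]), Or.inl h⟩

theorem ncard_le_card_edgeSet_compl_induce_add {m : ℕ} (S : Set (Fin m)) :
    S.ncard ≤
      Nat.card ((⊤ : (cliqueMinusMatching m)ᶜ.Subgraph).induce S).edgeSet + (m + 1) / 2 := by
  set E := ((⊤ : (cliqueMinusMatching m)ᶜ.Subgraph).induce S).edgeSet
  -- `T` holds the lower end of each matching pair inside `S`; the remaining vertices of `S` lie
  -- in distinct pairs `{2j, 2j + 1}`, of which there are `⌈m/2⌉`.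
  set T := {x ∈ S | ∃ y ∈ S, x < y ∧ x.val / 2 = y.val / 2}
  have hT : T.ncard ≤ E.ncard := by
    calc T.ncard ≤ (Sym2.inf '' E).ncard := by
          refine Set.ncard_le_ncard ?_
          rintro x ⟨hx, y, hy, hxy, hq⟩
          refine ⟨s(x, y), ⟨hx, hy, ?_⟩, inf_of_le_left hxy.le⟩
          simpa [cliqueMinusMatching_adj, hxy.ne] using hq
      _ ≤ E.ncard := Set.ncard_image_le
  have hST : (S \ T).ncard ≤ (m + 1) / 2 := by
    calc (S \ T).ncard ≤ (Finset.range ((m + 1) / 2) : Set ℕ).ncard := by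
          refine Set.ncard_le_ncard_of_injOn (fun x => x.val / 2) (fun x _ => ?_) ?_
            (Finset.finite_toSet _)
          · simp only [Finset.coe_range, Set.mem_Iio]
            omega
          · intro x hx y hy hq
            by_contra hxy
            rcases lt_or_gt_of_ne hxy with h | h
            · exact hx.2 ⟨hx.1, y, hy.1, h, hq⟩
            · exact hy.2 ⟨hy.1, x, hx.1, h, hq.symm⟩
      _ = (m + 1) / 2 := by simp
  calc S.ncard ≤ (S \ T).ncard + T.ncard := Set.ncard_le_ncard_sdiff_add_ncard S T
    _ ≤ Nat.card E + (m + 1) / 2 := by rw [Nat.card_coe_set_eq]; omega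

theorem card_edgeSet_add_card_verts_le {m : ℕ} (H : (cliqueMinusMatching m).Subgraph) :
    Nat.card H.edgeSet + Nat.card H.verts ≤ (Nat.card H.verts).choose 2 + (m + 1) / 2 := by
  have h₁ := H.card_edgeSet_add_card_edgeSet_compl_le
  have h₂ := ncard_le_card_edgeSet_compl_induce_add H.verts
  rw [← Nat.card_coe_set_eq] at h₂
  omega

theorem one_le_m2_cliqueMinusMatching {m : ℕ} (hm : 3 ≤ m) : 1 ≤ m2 (cliqueMinusMatching m) :=
  one_le_m2_of_adj (a := ⟨0, by omega⟩) (b := ⟨2, by omega⟩) (c := ⟨1, by omega⟩)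
    (by simp [cliqueMinusMatching_adj]) (by simp [cliqueMinusMatching_adj]) (by simp)

theorem dens2_lt_half {m v e : ℕ} (hm : 0 < m) (hvm : v ≤ m) (he : e ≤ v.choose 2)
    (hcount : e + v ≤ v.choose 2 + (m + 1) / 2) : dens2 v e < m / 2 := by
  have hm' : (0 : ℝ) < m := by exact_mod_cast hm
  unfold dens2
  split_ifs with he₀ hv₂
  · positivity
  · have : (2 : ℝ) ≤ m := by exact_mod_cast hv₂ ▸ hvm
    linarith
  have hv : 3 ≤ v := by
    by_contra! h
    interval_cases v <;> simp_all
  have hv' : (3 : ℝ) ≤ v := by exact_mod_cast hv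
  have hvm' : (v : ℝ) ≤ m := by exact_mod_cast hvm
  have hkey : 2 * (e : ℝ) + 2 * v ≤ v * (v - 1) + m + 1 := by
    have h₁ : (2 * (e + v) : ℕ) ≤ 2 * v.choose 2 + (m + 1) := by
      have := Nat.mul_div_le (m + 1) 2
      omega
    have h₂ : ((2 * (e + v) : ℕ) : ℝ) ≤ ((2 * v.choose 2 + (m + 1) : ℕ) : ℝ) := by
      exact_mod_cast h₁
    push_cast [Nat.cast_choose_two] at h₂
    linarith
  rw [div_lt_div_iff₀ (by linarith) (by norm_num)]
  -- the slack `m (v - 2) - 2 (e - 1)` is at least `(m - v)(v - 3) + 1`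
  nlinarith [mul_nonneg (sub_nonneg.2 hvm') (by linarith : (0 : ℝ) ≤ v - 3)]

theorem m2_cliqueMinusMatching_lt {m : ℕ} (hm : 0 < m) :
    m2 (cliqueMinusMatching m) < m / 2 :=
  m2_lt_of_forall fun H => dens2_lt_half hm (by simpa only [Nat.card_fin] using H.card_verts_le)
    H.card_edgeSet_le_choose_two (card_edgeSet_add_card_verts_le H)

theorem stmt14_general (s t k : ℕ) (hk : 2 ≤ k) (hks : 3 * k < s) (hst : s ≤ t) :
    m2Asym (⊤ : SimpleGraph (Fin (t - 1))) (cliqueMinusMatching s) ≤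
      m2Asym (⊤ : SimpleGraph (Fin t)) (cliqueMinusMatching ((s + k - 1) / k)) ∧
    m2 (cliqueMinusMatching s) ≤ m2 (⊤ : SimpleGraph (Fin (t - 1))) ∧
    StrictlyBalancedWrt (⊤ : SimpleGraph (Fin (t - 1))) (cliqueMinusMatching s) := by
  obtain ⟨n, rfl⟩ : ∃ n, t = n + 1 := ⟨t - 1, by omega⟩
  rw [Nat.add_sub_cancel]
  set μ := m2 (cliqueMinusMatching s)
  set μ' := m2 (cliqueMinusMatching ((s + k - 1) / k))
  have hn : 2 ≤ Fintype.card (Fin n) := by rw [Fintype.card_fin]; omega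
  have hμ₁ : 1 ≤ μ := one_le_m2_cliqueMinusMatching (by omega)
  have hμ : μ < ((Fintype.card (Fin n) : ℝ) + 1) / 2 := by
    have : (s : ℝ) ≤ n + 1 := by exact_mod_cast hst
    rw [Fintype.card_fin]
    linarith [m2_cliqueMinusMatching_lt (by omega : 0 < s)]
  have hμ'₁ : 1 ≤ μ' :=
    one_le_m2_cliqueMinusMatching ((Nat.le_div_iff_mul_le (by omega)).2 (by omega))
  refine ⟨?_, hμ.le.trans (le_m2_top (by rw [Fintype.card_fin]; omega)),
    strictlyBalancedWrt_top hn (by linarith) hμ⟩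
  have hcn := (two_lt_one_div_mul_of_lt_half (by linarith) hμ).le
  rw [m2Asym_top_eq hn (by linarith) hμ]
  calc _ ≤ asymDens (1 / μ') (n + 1) ((n + 1).choose 2) := by
        rw [Fintype.card_fin] at hcn ⊢
        exact asymDens_choose_le_asymDens_succ (by omega) (by positivity)
          (div_le_one_of_le₀ hμ'₁ (by positivity)) hcn
    _ ≤ _ := by simpa using asymDens_top_le_m2Asym (V := Fin (n + 1)) _ (by simp; omega)

theorem stmt14 (s t k : ℕ) (hk : 2 ≤ k) (hks : 3 * k < s) (hst : s ≤ t) (hs : 7 ≤ s) :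
    m2Asym (⊤ : SimpleGraph (Fin (t - 1))) (cliqueMinusMatching s) ≤
      m2Asym (⊤ : SimpleGraph (Fin t)) (cliqueMinusMatching ((s + k - 1) / k)) ∧
    m2 (cliqueMinusMatching s) ≤ m2 (⊤ : SimpleGraph (Fin (t - 1))) ∧
    StrictlyBalancedWrt (⊤ : SimpleGraph (Fin (t - 1))) (cliqueMinusMatching s) :=
  stmt14_general s t k hk hks hst
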